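/- Let ν be a probability measure on ℝ, let f := ν ∗ φ be the Gaussian mixture density f(y) = ∫ φ(y−u) dν(u), and let V(y) := −log(φ(y)²/f(y)). Then V''(y) ≥ 1 for all y ∈ ℝ. -/

import Mathlib

open MeasureTheory Real Filter

/-- The standard normal density. -/
noncomputable def gauss (y : ℝ) : ℝ := (Real.sqrt (2 * Real.pi))⁻¹ * Real.exp (-(y ^ 2) / 2)

/-- The Gaussian mixture density `f_ν = ν ∗ φ`. -/
noncomputable def mixDens (ν : Measure ℝ) (y : ℝ) : ℝ := ∫ u, gauss (y - u) ∂ν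

lemma sqrt2pi_pos : 0 < Real.sqrt (2 * Real.pi) := Real.sqrt_pos.mpr (by positivity)

lemma gauss_pos (t : ℝ) : 0 < gauss t :=
  mul_pos (inv_pos.mpr sqrt2pi_pos) (Real.exp_pos _)

lemma gauss_cont : Continuous gauss := by unfold gauss; fun_prop

lemma gauss_hasDerivAt (t : ℝ) : HasDerivAt gauss (-t * gauss t) t := by
  have h1 : HasDerivAt (fun t : ℝ => -(t ^ 2) / 2) (-t) t := by
    have := ((hasDerivAt_pow 2 t).neg.div_const 2)
    refine this.congr_deriv ?_
    simp; ring
  have h2 := (h1.exp).const_mul ((Real.sqrt (2 * Real.pi))⁻¹)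
  refine h2.congr_deriv ?_
  unfold gauss; ring

lemma exp_le_one' (t : ℝ) : Real.exp (-(t ^ 2) / 2) ≤ 1 :=
  Real.exp_le_one_iff.mpr (by nlinarith [sq_nonneg t])

lemma sq_mul_exp_le (t : ℝ) : t ^ 2 * Real.exp (-(t ^ 2) / 2) ≤ 2 := by
  have h := Real.add_one_le_exp (t ^ 2 / 2)
  have hp := Real.exp_pos (t ^ 2 / 2)
  have key : Real.exp (-(t ^ 2) / 2) = (Real.exp (t ^ 2 / 2))⁻¹ := by
    rw [← Real.exp_neg]; ring_nf
  rw [key]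
  rw [mul_inv_le_iff₀ hp]
  nlinarith

lemma gauss_le (t : ℝ) : gauss t ≤ (Real.sqrt (2 * Real.pi))⁻¹ := by
  have := exp_le_one' t
  have hc : (0:ℝ) ≤ (Real.sqrt (2 * Real.pi))⁻¹ := by positivity
  calc gauss t ≤ (Real.sqrt (2 * Real.pi))⁻¹ * 1 := mul_le_mul_of_nonneg_left this hc
  _ = _ := mul_one _

lemma sq_mul_gauss_le (t : ℝ) : t ^ 2 * gauss t ≤ 2 * (Real.sqrt (2 * Real.pi))⁻¹ := by
  have := sq_mul_exp_le t
  have hc : (0:ℝ) ≤ (Real.sqrt (2 * Real.pi))⁻¹ := by positivity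
  unfold gauss; nlinarith

lemma abs_id_mul_gauss_le (t : ℝ) : ‖t * gauss t‖ ≤ 2 * (Real.sqrt (2 * Real.pi))⁻¹ := by
  have h1 := sq_mul_gauss_le t
  have h2 := (gauss_pos t).le
  have h3 := gauss_le t
  have habs : |t| ≤ (t ^ 2 + 1) / 2 := by nlinarith [sq_nonneg (|t| - 1), sq_abs t]
  rw [Real.norm_eq_abs, abs_mul, abs_of_pos (gauss_pos t)]
  nlinarith [abs_nonneg t]

lemma abs_sq_sub_one_mul_gauss_le (t : ℝ) :
    ‖(t ^ 2 - 1) * gauss t‖ ≤ 3 * (Real.sqrt (2 * Real.pi))⁻¹ := by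
  have h1 := sq_mul_gauss_le t
  have h2 := (gauss_pos t).le
  have h3 := gauss_le t
  rw [Real.norm_eq_abs, abs_mul, abs_of_pos (gauss_pos t)]
  have : |t ^ 2 - 1| ≤ t ^ 2 + 1 := by
    rw [abs_le]; constructor <;> nlinarith [sq_nonneg t]
  nlinarith

section Aux
variable (ν : Measure ℝ) [IsProbabilityMeasure ν]

lemma integrable_of_bounded {g : ℝ → ℝ} (hg : Continuous g) {M : ℝ} (hM : ∀ t, ‖g t‖ ≤ M)
    (x : ℝ) : Integrable (fun u => g (x - u)) ν :=
  ⟨(hg.comp (continuous_const.sub continuous_id)).aestronglyMeasurable,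
    HasFiniteIntegral.of_bounded (C := M) (ae_of_all _ fun u => hM _)⟩

lemma integrable_gauss (x : ℝ) : Integrable (fun u => gauss (x - u)) ν :=
  integrable_of_bounded ν gauss_cont (fun t => by
    rw [Real.norm_eq_abs, abs_of_pos (gauss_pos t)]; exact gauss_le t) x

lemma integrable_id_gauss (x : ℝ) : Integrable (fun u => (x - u) * gauss (x - u)) ν :=
  integrable_of_bounded ν (continuous_id.mul gauss_cont) (fun t => abs_id_mul_gauss_le t) x

lemma integrable_sq_gauss (x : ℝ) : Integrable (fun u => (x - u) ^ 2 * gauss (x - u)) ν :=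
  integrable_of_bounded ν ((continuous_pow 2).mul gauss_cont) (fun t => by
    have h := gauss_pos t
    rw [Real.norm_eq_abs, abs_of_nonneg (show 0 ≤ ((fun a : ℝ => a ^ 2) * gauss) t from mul_nonneg (sq_nonneg t) h.le)]
    exact sq_mul_gauss_le t) x

lemma integrable_neg_id_gauss (x : ℝ) : Integrable (fun u => -(x - u) * gauss (x - u)) ν :=
  ((integrable_id_gauss ν x).neg).congr (ae_of_all _ fun u => by
    simp only [Pi.neg_apply]; ring)

lemma integrable_F2 (x : ℝ) : Integrable (fun u => ((x - u) ^ 2 - 1) * gauss (x - u)) ν :=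
  (((integrable_sq_gauss ν x)).sub (integrable_gauss ν x)).congr (ae_of_all _ fun u => by
    simp only [Pi.sub_apply]; ring)

lemma hasDerivAt_inner (u x : ℝ) :
    HasDerivAt (fun x => gauss (x - u)) (-(x - u) * gauss (x - u)) x := by
  have h := (gauss_hasDerivAt (x - u)).comp x ((hasDerivAt_id x).sub_const u)
  rw [mul_one] at h
  exact h

lemma hasDerivAt_inner2 (u x : ℝ) :
    HasDerivAt (fun x => -(x - u) * gauss (x - u)) (((x - u) ^ 2 - 1) * gauss (x - u)) x := by
  have h1 : HasDerivAt (fun t => -t * gauss t) (((x - u) ^ 2 - 1) * gauss (x - u)) (x - u) := by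
    have := ((hasDerivAt_id (x - u)).neg).mul (gauss_hasDerivAt (x - u))
    refine this.congr_deriv ?_
    simp only [Pi.neg_apply, id_eq]; ring
  have h := h1.comp x ((hasDerivAt_id x).sub_const u)
  rw [mul_one] at h
  exact h

lemma hasDerivAt_mixDens (x : ℝ) :
    HasDerivAt (mixDens ν) (∫ u, -(x - u) * gauss (x - u) ∂ν) x := by
  have := hasDerivAt_integral_of_dominated_loc_of_deriv_le (μ := ν) (x₀ := x)
    (F := fun x u => gauss (x - u)) (F' := fun x u => -(x - u) * gauss (x - u))
    (bound := fun _ => 2 * (Real.sqrt (2 * Real.pi))⁻¹) (Metric.ball_mem_nhds x one_pos)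
    (Eventually.of_forall fun y => (integrable_gauss ν y).aestronglyMeasurable)
    (integrable_gauss ν x)
    ((integrable_neg_id_gauss ν x).aestronglyMeasurable)
    (ae_of_all _ fun u y _ => by
      show ‖-(y - u) * gauss (y - u)‖ ≤ 2 * (Real.sqrt (2 * Real.pi))⁻¹
      rw [neg_mul, norm_neg]; exact abs_id_mul_gauss_le (y - u))
    (integrable_const _)
    (ae_of_all _ fun u y _ => hasDerivAt_inner u y)
  exact this.2

lemma hasDerivAt_mixDens' (x : ℝ) :
    HasDerivAt (fun x => ∫ u, -(x - u) * gauss (x - u) ∂ν)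
      (∫ u, ((x - u) ^ 2 - 1) * gauss (x - u) ∂ν) x := by
  have := hasDerivAt_integral_of_dominated_loc_of_deriv_le (μ := ν) (x₀ := x)
    (F := fun x u => -(x - u) * gauss (x - u))
    (F' := fun x u => ((x - u) ^ 2 - 1) * gauss (x - u))
    (bound := fun _ => 3 * (Real.sqrt (2 * Real.pi))⁻¹) (Metric.ball_mem_nhds x one_pos)
    (Eventually.of_forall fun y => (integrable_neg_id_gauss ν y).aestronglyMeasurable)
    (integrable_neg_id_gauss ν x)
    ((integrable_F2 ν x).aestronglyMeasurable)
    (ae_of_all _ fun u y _ => abs_sq_sub_one_mul_gauss_le (y - u))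
    (integrable_const _)
    (ae_of_all _ fun u y _ => hasDerivAt_inner2 u y)
  exact this.2

lemma mixDens_pos (x : ℝ) : 0 < mixDens ν x := by
  rw [mixDens]
  have h := (integral_pos_iff_support_of_nonneg (fun u => (gauss_pos (x - u)).le)
    (integrable_gauss ν x)).mpr
  apply h
  have : (Function.support fun u => gauss (x - u)) = Set.univ := by
    ext u; simp [Function.support, (gauss_pos (x - u)).ne']
  rw [this]
  simp
end Aux

theorem second_deriv_V_ge_one (ν : Measure ℝ) [IsProbabilityMeasure ν]
    (V : ℝ → ℝ) (hV : V = fun y => -Real.log (gauss y ^ 2 / mixDens ν y)) :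
    ∀ y : ℝ, 1 ≤ deriv (deriv V) y := by
  intro y
  set C : ℝ := (Real.sqrt (2 * Real.pi))⁻¹ with hC
  have hCpos : 0 < C := inv_pos.mpr sqrt2pi_pos
  -- Step 1: rewrite V
  have hV2 : V = fun z => z ^ 2 - 2 * Real.log C + Real.log (mixDens ν z) := by
    rw [hV]; funext z
    have hg : gauss z ^ 2 ≠ 0 := (pow_pos (gauss_pos z) 2).ne'
    have hf : mixDens ν z ≠ 0 := (mixDens_pos ν z).ne'
    rw [Real.log_div hg hf, Real.log_pow]
    have : Real.log (gauss z) = Real.log C + (-(z ^ 2) / 2) := by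
      rw [gauss, Real.log_mul hCpos.ne' (Real.exp_pos _).ne', Real.log_exp]
    rw [this]
    push_cast
    ring
  -- Step 2: first derivative
  have hD1 : deriv V = fun z => 2 * z + (∫ u, -(z - u) * gauss (z - u) ∂ν) / mixDens ν z := by
    funext z
    have h1 : HasDerivAt (fun z : ℝ => z ^ 2 - 2 * Real.log C) (2 * z) z := by
      have := (hasDerivAt_pow 2 z).sub_const (2 * Real.log C)
      refine this.congr_deriv ?_
      push_cast; ring
    have h2 : HasDerivAt (fun z => Real.log (mixDens ν z))
        ((∫ u, -(z - u) * gauss (z - u) ∂ν) / mixDens ν z) z :=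
      (hasDerivAt_mixDens ν z).log (mixDens_pos ν z).ne'
    rw [hV2]
    exact (h1.add h2).deriv
  -- Step 3: second derivative
  set A : ℝ := ∫ u, gauss (y - u) ∂ν with hA
  set B : ℝ := ∫ u, (y - u) * gauss (y - u) ∂ν with hB
  set Cq : ℝ := ∫ u, (y - u) ^ 2 * gauss (y - u) ∂ν with hCq
  have hApos : 0 < A := mixDens_pos ν y
  have hF2 : (∫ u, ((y - u) ^ 2 - 1) * gauss (y - u) ∂ν) = Cq - A := by
    rw [show (fun u => ((y - u) ^ 2 - 1) * gauss (y - u))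
        = fun u => (y - u) ^ 2 * gauss (y - u) - gauss (y - u) from funext fun u => by ring,
      integral_sub (integrable_sq_gauss ν y) (integrable_gauss ν y)]
  have hF1 : (∫ u, -(y - u) * gauss (y - u) ∂ν) = -B := by
    rw [show (fun u => -(y - u) * gauss (y - u))
        = fun u => -((y - u) * gauss (y - u)) from funext fun u => by ring,
      integral_neg]
  have hD2 : deriv (deriv V) y
      = 2 + ((Cq - A) * A - (-B) * (-B)) / A ^ 2 := by
    rw [hD1]
    have h1 : HasDerivAt (fun z : ℝ => 2 * z) 2 y := by
      simpa using (hasDerivAt_id y).const_mul (2 : ℝ)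
    have h2 := (hasDerivAt_mixDens' ν y).div (hasDerivAt_mixDens ν y) (mixDens_pos ν y).ne'
    rw [hF1, hF2] at h2
    have := (h1.add h2).deriv
    rw [show (fun z => 2 * z + (∫ u, -(z - u) * gauss (z - u) ∂ν) / mixDens ν z) = (fun z : ℝ => 2 * z) + (fun x => ∫ u, -(x - u) * gauss (x - u) ∂ν) / mixDens ν from rfl, this]
    rfl
  -- Step 4: Cauchy-Schwarz via discriminant
  have hq : ∀ t : ℝ, 0 ≤ A * (t * t) + -(2 * B) * t + Cq := by
    intro t
    have hnn : 0 ≤ ∫ u, (t - (y - u)) ^ 2 * gauss (y - u) ∂ν :=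
      integral_nonneg fun u => mul_nonneg (sq_nonneg _) (gauss_pos _).le
    have hi1 : Integrable (fun u => t ^ 2 * gauss (y - u)) ν :=
      (integrable_gauss ν y).const_mul _
    have hi2 : Integrable (fun u => (2 * t) * ((y - u) * gauss (y - u))) ν :=
      (integrable_id_gauss ν y).const_mul _
    have hi12 : Integrable
        (fun u => t ^ 2 * gauss (y - u) - (2 * t) * ((y - u) * gauss (y - u))) ν := hi1.sub hi2
    have hexp : (∫ u, (t - (y - u)) ^ 2 * gauss (y - u) ∂ν)
        = A * (t * t) + -(2 * B) * t + Cq := by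
      rw [show (fun u => (t - (y - u)) ^ 2 * gauss (y - u))
          = fun u => t ^ 2 * gauss (y - u) - (2 * t) * ((y - u) * gauss (y - u))
            + (y - u) ^ 2 * gauss (y - u) from funext fun u => by ring,
        integral_add hi12 (integrable_sq_gauss ν y),
        integral_sub hi1 hi2,
        integral_const_mul, integral_const_mul]
      ring
    rw [hexp] at hnn
    exact hnn
  have hdisc := discrim_le_zero hq
  rw [discrim] at hdisc
  have hkey : B ^ 2 ≤ A * Cq := by nlinarith
  rw [hD2]
  have heq : 2 + ((Cq - A) * A - (-B) * (-B)) / A ^ 2 - 1 = (A * Cq - B ^ 2) / A ^ 2 := by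
    field_simp
    ring
  have hnn : 0 ≤ (A * Cq - B ^ 2) / A ^ 2 :=
    div_nonneg (by linarith) (sq_nonneg A)
  linarith
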